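/- Let τ = (E, Δ) be a partial trace with no nested posting, i.e., every post event belongs to the initial message of its handler. Then for every pair of handlers h, h′ the post events of h that post to h′ are totally ordered by po, and in every axiomatically consistent extension of τ the execution order eo on the get events of the messages posted by h to h′ coincides with this po order on the corresponding post events; moreover every event of an eo-earlier such message is eo†-before every event of an eo-later one. -/
import Mathlib


/-!
Common framework for event-driven (ED) traces.

Handlers, shared variables and values are modelled as natural numbers;
events are (abstract) natural-number identifiers carrying a label.
-/

/-- Labels of events of event-driven programs: a read `⟨h,read,x⟩`, a write
`⟨h,write,x,v⟩`, a post `⟨h,post,h′⟩` or a get `⟨h,get⟩` of a handler `h`. -/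
inductive EventLabel : Type where
  | read  (h x : ℕ)
  | write (h x v : ℕ)
  | post  (h h' : ℕ)
  | get   (h : ℕ)
deriving DecidableEq

/-- The six basic relations of an ED trace. -/
inductive EDRel : Type where
  | po | rf | co | pb | mo | eo
deriving DecidableEq

/-- The handler of an event. -/
def EventLabel.hnd : EventLabel → ℕ
  | .read h _    => h
  | .write h _ _ => h
  | .post h _    => h
  | .get h       => h

def EventLabel.IsGet (l : EventLabel) : Prop := ∃ h, l = .get h
def EventLabel.IsPost (l : EventLabel) : Prop := ∃ h h', l = .post h h'
/-- `l` is a write event on variable `x`. -/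
def EventLabel.IsWriteTo (l : EventLabel) (x : ℕ) : Prop := ∃ h v, l = .write h x v
/-- `l` is a read event on variable `x`. -/
def EventLabel.IsReadOf (l : EventLabel) (x : ℕ) : Prop := ∃ h, l = .read h x
/-- `l` is a post event posting to handler `h'`. -/
def EventLabel.PostsTo (l : EventLabel) (h' : ℕ) : Prop := ∃ h, l = .post h h'

/-- An event-driven trace: a finite set `E` of events (natural-number
identifiers), a labelling of events, and a family of labelled edges. -/
structure EDTrace : Type where
  E : Finset ℕ
  lbl : ℕ → EventLabel
  rel : EDRel → ℕ → ℕ → Prop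

namespace EDTrace

/-- The from-read relation `fr = rf⁻¹ ; co`. -/
def fr (τ : EDTrace) (a b : ℕ) : Prop := ∃ w, τ.rel .rf w a ∧ τ.rel .co w b

/-- The queue order `qo = pb⁻¹ ; mo ; pb` on get events. -/
def qo (τ : EDTrace) (a b : ℕ) : Prop :=
  ∃ p q, τ.rel .pb p a ∧ τ.rel .pb q b ∧ τ.rel .mo p q

/-- `e` belongs to the (non-initial) message whose get event is `g`:
`g` is a get event and `e` is po-reachable from `g`. -/
def InMsg (τ : EDTrace) (g e : ℕ) : Prop :=
  (τ.lbl g).IsGet ∧ Relation.ReflTransGen (τ.rel .po) g e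

/-- `eo†`: every event of a message is related to every event of an
eo-later message of the same handler. -/
def eoDag (τ : EDTrace) (a b : ℕ) : Prop :=
  ∃ g g', τ.InMsg g a ∧ τ.InMsg g' b ∧ τ.rel .eo g g'

/-- One step of the happens-before relation:
`po ∪ rf ∪ fr ∪ co ∪ pb ∪ mo ∪ eo† ∪ qo`. -/
def step (τ : EDTrace) (a b : ℕ) : Prop :=
  τ.rel .po a b ∨ τ.rel .rf a b ∨ τ.fr a b ∨ τ.rel .co a b ∨
  τ.rel .pb a b ∨ τ.rel .mo a b ∨ τ.eoDag a b ∨ τ.qo a b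

/-- The happens-before relation: transitive closure of
`po ∪ rf ∪ fr ∪ co ∪ pb ∪ mo ∪ eo† ∪ qo`. -/
def hb (τ : EDTrace) : ℕ → ℕ → Prop := Relation.TransGen τ.step

/-- Axiomatic consistency: acyclicity of `po ∪ rf ∪ fr ∪ co ∪ pb ∪ mo ∪ eo† ∪ qo`. -/
def Consistent (τ : EDTrace) : Prop := ∀ e, ¬ τ.hb e e

/-- `e` belongs to the initial message of its handler: it belongs to no
message started by a get event. -/
def InInit (τ : EDTrace) (e : ℕ) : Prop :=
  e ∈ τ.E ∧ ¬ ∃ g ∈ τ.E, τ.InMsg g e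

/-- Two events belong to the same message (either the message of a common
get event, or both to the initial message of the same handler). -/
def SameMsg (τ : EDTrace) (a b : ℕ) : Prop :=
  (∃ g ∈ τ.E, τ.InMsg g a ∧ τ.InMsg g b) ∨
  (τ.InInit a ∧ τ.InInit b ∧ (τ.lbl a).hnd = (τ.lbl b).hnd)

/-- Well-formedness of the `po, rf, co, pb` components of a trace. -/
structure WFCore (τ : EDTrace) : Prop where
  edges_mem : ∀ r a b, τ.rel r a b → a ∈ τ.E ∧ b ∈ τ.E
  po_trans : Transitive (τ.rel .po)
  po_irrefl : ∀ a, ¬ τ.rel .po a a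
  po_same_handler : ∀ a b, τ.rel .po a b → (τ.lbl a).hnd = (τ.lbl b).hnd
  po_msg : ∀ a b, τ.rel .po a b → τ.SameMsg a b
  po_total : ∀ a ∈ τ.E, ∀ b ∈ τ.E, τ.SameMsg a b → a ≠ b →
    τ.rel .po a b ∨ τ.rel .po b a
  rf_lbl : ∀ a b, τ.rel .rf a b → ∃ x, (τ.lbl a).IsWriteTo x ∧ (τ.lbl b).IsReadOf x
  rf_unique : ∀ b ∈ τ.E, (∃ x, (τ.lbl b).IsReadOf x) → ∃! a, τ.rel .rf a b
  co_lbl : ∀ a b, τ.rel .co a b → ∃ x, (τ.lbl a).IsWriteTo x ∧ (τ.lbl b).IsWriteTo x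
  co_trans : Transitive (τ.rel .co)
  co_irrefl : ∀ a, ¬ τ.rel .co a a
  co_total : ∀ x, ∀ a ∈ τ.E, ∀ b ∈ τ.E, (τ.lbl a).IsWriteTo x → (τ.lbl b).IsWriteTo x →
    a ≠ b → τ.rel .co a b ∨ τ.rel .co b a
  pb_lbl : ∀ a b, τ.rel .pb a b → ∃ h h', τ.lbl a = .post h h' ∧ τ.lbl b = .get h'
  pb_get : ∀ b ∈ τ.E, (τ.lbl b).IsGet → ∃! a, τ.rel .pb a b
  pb_post : ∀ a ∈ τ.E, (τ.lbl a).IsPost → ∃! b, τ.rel .pb a b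

/-- Well-formedness of a (total) ED trace: additionally `mo` totally orders
the posts to each handler and `eo` totally orders the gets of each handler. -/
structure WF (τ : EDTrace) extends WFCore τ : Prop where
  mo_lbl : ∀ a b, τ.rel .mo a b → ∃ h', (τ.lbl a).PostsTo h' ∧ (τ.lbl b).PostsTo h'
  mo_trans : Transitive (τ.rel .mo)
  mo_irrefl : ∀ a, ¬ τ.rel .mo a a
  mo_total : ∀ h', ∀ a ∈ τ.E, ∀ b ∈ τ.E, (τ.lbl a).PostsTo h' → (τ.lbl b).PostsTo h' →
    a ≠ b → τ.rel .mo a b ∨ τ.rel .mo b a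
  eo_lbl : ∀ a b, τ.rel .eo a b → ∃ h, τ.lbl a = .get h ∧ τ.lbl b = .get h
  eo_trans : Transitive (τ.rel .eo)
  eo_irrefl : ∀ a, ¬ τ.rel .eo a a
  eo_total : ∀ h, ∀ a ∈ τ.E, ∀ b ∈ τ.E, τ.lbl a = .get h → τ.lbl b = .get h →
    a ≠ b → τ.rel .eo a b ∨ τ.rel .eo b a

/-- A partial trace: the `eo` and `mo` components are omitted (empty). -/
def IsPartial (τ : EDTrace) : Prop :=
  (∀ a b, ¬ τ.rel .eo a b) ∧ (∀ a b, ¬ τ.rel .mo a b)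

/-- `τ'` extends the (partial) trace `τ`: same events, labels and
`po, rf, co, pb` edges; only `eo` and `mo` may be added. -/
def Extends (τ' τ : EDTrace) : Prop :=
  τ'.E = τ.E ∧ τ'.lbl = τ.lbl ∧ τ'.rel .po = τ.rel .po ∧ τ'.rel .rf = τ.rel .rf ∧
  τ'.rel .co = τ.rel .co ∧ τ'.rel .pb = τ.rel .pb

/-- ED-consistency of a partial trace: it can be extended, by adding `eo`
edges (total per handler) and `mo` edges (total per target handler), to a
well-formed axiomatically consistent trace. -/
def EDConsistent (τ : EDTrace) : Prop :=
  ∃ τ' : EDTrace, Extends τ' τ ∧ τ'.WF ∧ τ'.Consistent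

end EDTrace

/-- Let `τ` be a (well-formed) partial trace with no nested
posting (every post event belongs to the initial message of its handler).
Then (i) for every pair of handlers `h, h'`, the post events of `h` posting to
`h'` are totally ordered by `po`; and (ii) in every axiomatically consistent
extension `τ'` of `τ`, the execution order `eo` on the get events of the
messages posted by `h` to `h'` coincides with this `po` order on the
corresponding posts, and moreover every event of an eo-earlier such message is
`eo†`-before every event of an eo-later one. -/
theorem statement6 (τ : EDTrace) (hwf : τ.WFCore) (hpart : τ.IsPartial)
    (hnonest : ∀ e ∈ τ.E, (τ.lbl e).IsPost → τ.InInit e) :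
    (∀ h h', ∀ p ∈ τ.E, ∀ q ∈ τ.E,
        τ.lbl p = .post h h' → τ.lbl q = .post h h' → p ≠ q →
        τ.rel .po p q ∨ τ.rel .po q p) ∧
    (∀ τ' : EDTrace, EDTrace.Extends τ' τ → τ'.WF → τ'.Consistent →
      ∀ h h', ∀ p ∈ τ.E, ∀ q ∈ τ.E,
        τ.lbl p = .post h h' → τ.lbl q = .post h h' → p ≠ q →
        ∀ g g', τ.rel .pb p g → τ.rel .pb q g' →
          ((τ.rel .po p q ↔ τ'.rel .eo g g') ∧
           (τ'.rel .eo g g' →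
             ∀ e e', τ'.InMsg g e → τ'.InMsg g' e' → τ'.eoDag e e'))) := by

  have part1 : ∀ h h', ∀ p ∈ τ.E, ∀ q ∈ τ.E,
      τ.lbl p = .post h h' → τ.lbl q = .post h h' → p ≠ q →
      τ.rel .po p q ∨ τ.rel .po q p := by
    intro h h' p hp q hq lp lq hne
    apply hwf.po_total p hp q hq _ hne
    refine Or.inr ⟨hnonest p hp ⟨h, h', lp⟩, hnonest q hq ⟨h, h', lq⟩, ?_⟩
    simp [lp, lq, EventLabel.hnd]
  refine ⟨part1, ?_⟩
  intro τ' hext hwf' hcons h h' p hp q hq lp lq hne g g' hpg hqg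
  obtain ⟨hE, hlbl, hpo, hrf, hco, hpb⟩ := hext
  -- facts about g, g'
  have hgmem : g ∈ τ.E := (hwf.edges_mem .pb p g hpg).2
  have hgmem' : g' ∈ τ.E := (hwf.edges_mem .pb q g' hqg).2
  have hglbl : τ.lbl g = .get h' := by
    obtain ⟨h0, h0', e1, e2⟩ := hwf.pb_lbl p g hpg
    rw [lp] at e1
    obtain ⟨rfl, rfl⟩ := (EventLabel.post.injEq ..).mp e1.symm
    exact e2
  have hglbl' : τ.lbl g' = .get h' := by
    obtain ⟨h0, h0', e1, e2⟩ := hwf.pb_lbl q g' hqg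
    rw [lq] at e1
    obtain ⟨rfl, rfl⟩ := (EventLabel.post.injEq ..).mp e1.symm
    exact e2
  have hgne : g ≠ g' := by
    rintro rfl
    obtain ⟨a, -, ha⟩ := hwf.pb_get g hgmem ⟨h', hglbl⟩
    exact hne ((ha p hpg).trans (ha q hqg).symm)
  -- forward direction (generic over the two posts)
  have fwd : ∀ p1 ∈ τ.E, ∀ q1 ∈ τ.E, τ.lbl p1 = .post h h' → τ.lbl q1 = .post h h' →
      p1 ≠ q1 → ∀ g1 g1', τ.rel .pb p1 g1 → τ.rel .pb q1 g1' → g1 ≠ g1' →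
      τ.lbl g1 = .get h' → τ.lbl g1' = .get h' →
      τ.rel .po p1 q1 → τ'.rel .eo g1 g1' := by
    intro p1 hp1 q1 hq1 lp1 lq1 hne1 g1 g1' hpg1 hqg1 hgne1 hgl1 hgl1' hpoq
    have hp1' : p1 ∈ τ'.E := hE ▸ hp1
    have hq1' : q1 ∈ τ'.E := hE ▸ hq1
    have hmo : τ'.rel .mo p1 q1 := by
      rcases hwf'.mo_total h' p1 hp1' q1 hq1'
          ⟨h, hlbl ▸ lp1⟩ ⟨h, hlbl ▸ lq1⟩ hne1 with hm | hm
      · exact hm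
      · exfalso
        exact hcons p1 (Relation.TransGen.head (Or.inl (hpo ▸ hpoq))
          (Relation.TransGen.single (Or.inr (Or.inr (Or.inr (Or.inr (Or.inr (Or.inl hm))))))))
    have hqo : τ'.qo g1 g1' := ⟨p1, q1, hpb ▸ hpg1, hpb ▸ hqg1, hmo⟩
    rcases hwf'.eo_total h' g1 (hE ▸ (hwf.edges_mem .pb p1 g1 hpg1).2)
        g1' (hE ▸ (hwf.edges_mem .pb q1 g1' hqg1).2)
        (hlbl ▸ hgl1) (hlbl ▸ hgl1') hgne1 with he | he
    · exact he
    · exfalso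
      have hdag : τ'.eoDag g1' g1 :=
        ⟨g1', g1, ⟨⟨h', hlbl ▸ hgl1'⟩, Relation.ReflTransGen.refl⟩,
          ⟨⟨h', hlbl ▸ hgl1⟩, Relation.ReflTransGen.refl⟩, he⟩
      exact hcons g1 (Relation.TransGen.head
        (Or.inr (Or.inr (Or.inr (Or.inr (Or.inr (Or.inr (Or.inr hqo)))))))
        (Relation.TransGen.single
          (Or.inr (Or.inr (Or.inr (Or.inr (Or.inr (Or.inr (Or.inl hdag)))))))))
  constructor
  · constructor
    · exact fun hpoq => fwd p hp q hq lp lq hne g g' hpg hqg hgne hglbl hglbl' hpoq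
    · intro heo
      rcases part1 h h' p hp q hq lp lq hne with hpo1 | hpo1
      · exact hpo1
      · exfalso
        have heo' : τ'.rel .eo g' g :=
          fwd q hq p hp lq lp hne.symm g' g hqg hpg hgne.symm hglbl' hglbl hpo1
        exact hwf'.eo_irrefl g (hwf'.eo_trans heo heo')
  · intro heo e e' he he'
    exact ⟨g, g', he, he', heo⟩
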